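/- arXiv:1707.02473 — 7 statements merged into one kernel-verified Lean document; each statement's English description precedes it below -/
import Mathlib

section
/- If a graph G with n vertices and m edges is matching-decyclable, then m ≤ ⌊3n/2⌋ − 1. -/
open SimpleGraph

/-- `M` is a matching contained in the edge set of `G`. -/
def IsMatchingIn {V : Type*} (G : SimpleGraph V) (M : Set (Sym2 V)) : Prop :=
  M ⊆ G.edgeSet ∧ ∀ e ∈ M, ∀ f ∈ M, e ≠ f → ∀ v : V, v ∈ e → v ∉ f

/-- `G` is matching-decyclable: some matching `M ⊆ E(G)` has `G - M` acyclic. -/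
def MDecyclable {V : Type*} (G : SimpleGraph V) : Prop :=
  ∃ M : Set (Sym2 V), IsMatchingIn G M ∧ (G.deleteEdges M).IsAcyclic

/-- `G` is sparse: every nonempty subgraph `H` satisfies `|E(H)| ≤ ⌊3|V(H)|/2⌋ - 1`. -/
def Sparse {V : Type*} (G : SimpleGraph V) : Prop :=
  ∀ H : G.Subgraph, H.verts.Nonempty →
    Nat.card H.edgeSet ≤ 3 * Nat.card H.verts / 2 - 1

/-- A graph is 2-connected: connected, at least 3 vertices, and no cut vertex. -/
def TwoConnected {V : Type*} (G : SimpleGraph V) : Prop :=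
  G.Connected ∧ 3 ≤ Nat.card V ∧
    ∀ v : V, (((⊤ : G.Subgraph).deleteVerts {v}).coe).Connected

/-- `G` is fairly cubic: exactly two vertices of degree 2, the rest of degree 3. -/
def FairlyCubic {V : Type*} [Fintype V] (G : SimpleGraph V) [DecidableRel G.Adj] : Prop :=
  Nat.card {v : V // G.degree v = 2} = 2 ∧ ∀ v : V, G.degree v = 2 ∨ G.degree v = 3

def diamondGraph : SimpleGraph (Fin 4) :=
  SimpleGraph.fromEdgeSet {s(0,1), s(0,2), s(0,3), s(1,2), s(2,3)}

def triangleGraph : SimpleGraph (Fin 3) := ⊤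

def gemGraph : SimpleGraph (Fin 5) :=
  SimpleGraph.fromEdgeSet {s(0,1), s(1,2), s(2,3), s(0,4), s(1,4), s(2,4), s(3,4)}

def houseGraph : SimpleGraph (Fin 5) :=
  SimpleGraph.fromEdgeSet {s(0,1), s(1,2), s(2,3), s(0,3), s(0,4), s(1,4)}

def dominoGraph : SimpleGraph (Fin 6) :=
  SimpleGraph.fromEdgeSet {s(0,1), s(1,2), s(2,3), s(0,3), s(1,4), s(4,5), s(2,5)}

/-- `K_{3,3}` minus one edge. -/
def K33minus : SimpleGraph (Fin 3 ⊕ Fin 3) :=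
  SimpleGraph.fromEdgeSet
    {e ∈ (completeBipartiteGraph (Fin 3) (Fin 3)).edgeSet | e ≠ s(Sum.inl 0, Sum.inr 0)}

/-- `G` contains `H` as a (not necessarily induced) subgraph. -/
def ContainsSub {V W : Type*} (G : SimpleGraph V) (H : SimpleGraph W) : Prop :=
  ∃ B : G.Subgraph, Nonempty (B.coe ≃g H)

/-- Chordal: no induced cycle of length at least 4. -/
def Chordal {V : Type*} (G : SimpleGraph V) : Prop :=
  ∀ n : ℕ, 4 ≤ n → IsEmpty (SimpleGraph.cycleGraph n ↪g G)

/-- Distance-hereditary: no induced house, hole, domino, or gem. -/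
def DistHereditary {V : Type*} (G : SimpleGraph V) : Prop :=
  IsEmpty (houseGraph ↪g G) ∧ IsEmpty (dominoGraph ↪g G) ∧ IsEmpty (gemGraph ↪g G) ∧
    ∀ n : ℕ, 5 ≤ n → IsEmpty (SimpleGraph.cycleGraph n ↪g G)

/-- `v` is a cut vertex of `G`. -/
def IsCutVertex {V : Type*} (G : SimpleGraph V) (v : V) : Prop :=
  G.Connected ∧ ¬ (((⊤ : G.Subgraph).deleteVerts {v}).coe).Connected

/-- A block of `G`: either (the subgraph spanned by) a bridge, or a maximal
2-connected subgraph. -/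
def IsBlock {V : Type*} (G : SimpleGraph V) (B : G.Subgraph) : Prop :=
  (∃ u w : V, G.IsBridge s(u, w) ∧ B.verts = {u, w} ∧ B.edgeSet = {s(u, w)}) ∨
  (TwoConnected B.coe ∧ ∀ B' : G.Subgraph, B ≤ B' → TwoConnected B'.coe → B' = B)

/-- A leaf block: a block containing exactly one cut vertex of `G`. -/
def IsLeafBlock {V : Type*} (G : SimpleGraph V) (B : G.Subgraph) : Prop :=
  IsBlock G B ∧ ∃! v : V, v ∈ B.verts ∧ IsCutVertex G v

/-- A chain: a connected graph with exactly two leaf blocks, whose leaf blocks are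
diamonds and whose non-leaf blocks are triangles. -/
def IsChainGraph {V : Type*} (G : SimpleGraph V) : Prop :=
  G.Connected ∧
  Nat.card {B : G.Subgraph // IsLeafBlock G B} = 2 ∧
  (∀ B : G.Subgraph, IsLeafBlock G B → Nonempty (B.coe ≃g diamondGraph)) ∧
  (∀ B : G.Subgraph, IsBlock G B → ¬ IsLeafBlock G B → Nonempty (B.coe ≃g triangleGraph))


/-! Deleting the matching `M` leaves a forest, so `m ≤ (n - 1) + |M|`, while the edges of `M`
cover `2|M| ≤ n` vertices; hence `m ≤ n - 1 + ⌊n/2⌋ = ⌊3n/2⌋ - 1`. -/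

namespace SimpleGraph

variable {V : Type*} {G : SimpleGraph V}

theorem IsAcyclic.ncard_edgeSet_add_one_le [Finite V] [Nonempty V] (hG : G.IsAcyclic) :
    G.edgeSet.ncard + 1 ≤ Nat.card V := by
  have := Fintype.ofFinite V
  obtain ⟨T, hGT, -, hT⟩ :=
    (connected_top (V := V)).exists_isTree_le_of_le_of_isAcyclic le_top hG
  classical
  rw [Nat.card_eq_fintype_card, ← hT.card_edgeFinset, ← coe_edgeFinset, Set.ncard_coe_finset]
  exact Nat.add_le_add_right (Finset.card_mono (edgeFinset_mono hGT)) 1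

theorem ncard_edgeSet_le_ncard_edgeSet_deleteEdges_add [Finite V] (M : Set (Sym2 V)) :
    G.edgeSet.ncard ≤ (G.deleteEdges M).edgeSet.ncard + M.ncard := by
  rw [edgeSet_deleteEdges]
  calc G.edgeSet.ncard ≤ (G.edgeSet \ M ∪ M).ncard :=
        Set.ncard_le_ncard (by simp) (Set.toFinite _)
    _ ≤ _ := Set.ncard_union_le _ _

end SimpleGraph

theorem IsMatchingIn.two_mul_ncard_le {V : Type*} [Finite V] {G : SimpleGraph V}
    {M : Set (Sym2 V)} (hM : IsMatchingIn G M) : 2 * M.ncard ≤ Nat.card V := by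
  classical
  have := Fintype.ofFinite V
  set Mf := (Set.toFinite M).toFinset
  have hcard : ∀ e ∈ Mf, e.toFinset.card = 2 := fun e he =>
    Sym2.card_toFinset_of_not_isDiag e
      (G.not_isDiag_of_mem_edgeSet (hM.1 ((Set.toFinite M).mem_toFinset.mp he)))
  have hdisj : (Mf : Set (Sym2 V)).PairwiseDisjoint Sym2.toFinset := by
    intro e he f hf hef
    refine Finset.disjoint_left.mpr fun v hve hvf => ?_
    rw [Set.Finite.coe_toFinset] at he hf
    rw [Sym2.mem_toFinset] at hve hvf
    exact hM.2 e he f hf hef v hve hvf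
  calc 2 * M.ncard = ∑ e ∈ Mf, e.toFinset.card := by
        rw [Finset.sum_congr rfl hcard, Finset.sum_const, smul_eq_mul, mul_comm,
          Set.ncard_eq_toFinset_card M]
    _ = (Mf.biUnion Sym2.toFinset).card := (Finset.card_biUnion hdisj).symm
    _ ≤ Nat.card V := by rw [Nat.card_eq_fintype_card]; exact Finset.card_le_univ _

theorem stmt1 {V : Type*} [Fintype V] [Nonempty V] (G : SimpleGraph V)
    [DecidableRel G.Adj] (h : MDecyclable G) :
    G.edgeFinset.card ≤ 3 * Fintype.card V / 2 - 1 := by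
  obtain ⟨M, hM, hacyclic⟩ := h
  have hforest := hacyclic.ncard_edgeSet_add_one_le
  have hmatching := hM.two_mul_ncard_le
  have hsplit := G.ncard_edgeSet_le_ncard_edgeSet_deleteEdges_add M
  rw [← coe_edgeFinset, Set.ncard_coe_finset] at hsplit
  rw [Nat.card_eq_fintype_card] at hforest hmatching
  omega
end

section
/- Every 2-connected fairly cubic graph is sparse. -/
/-!
Let `H` be a nonempty subgraph with `2|E(H)| ≥ 3|V(H)| - 1`. All degrees are at most 3, so by the
degree sum every vertex of `H` except at most one vertex `u` has `H`-degree 3, and hence has all of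
its `G`-neighbours in `H`; moreover `u` itself has an `H`-neighbour. As `G - u` is connected, `H`
then contains every vertex other than `u`, among them a vertex of `G`-degree 2, which cannot have
`H`-degree 3.
-/

open SimpleGraph

open Finset

namespace Finset

theorem exists_forall_ne_eq_of_mul_card_le_sum_add_one {ι : Type*} {S : Finset ι} {f : ι → ℕ}
    {b : ℕ} (hS : S.Nonempty) (hle : ∀ i ∈ S, f i ≤ b) (hsum : b * #S ≤ ∑ i ∈ S, f i + 1) :
    ∃ j ∈ S, b ≤ f j + 1 ∧ ∀ i ∈ S, i ≠ j → f i = b := by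
  classical
  have hdefect : ∑ i ∈ S, (b - f i) ≤ 1 := by
    rw [sum_tsub_distrib S hle, sum_const, smul_eq_mul, mul_comm]
    omega
  obtain ⟨j, hj, hmin⟩ := S.exists_min_image f hS
  refine ⟨j, hj, ?_, fun i hi hij => ?_⟩
  · have := (single_le_sum (fun i _ => Nat.zero_le (b - f i)) hj).trans hdefect
    omega
  · have hpair : (b - f i) + (b - f j) ≤ 1 := by
      rw [← sum_pair (f := fun k => b - f k) hij]
      exact (sum_le_sum_of_subset (insert_subset hi (singleton_subset_iff.2 hj))).trans hdefect
    have := hmin i hi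
    have := hle i hi
    omega

end Finset

namespace SimpleGraph.Subgraph

variable {V : Type*} {G : SimpleGraph V}

theorem adj_of_degree_eq {H : G.Subgraph} {v w : V} [Fintype (H.neighborSet v)]
    [Fintype (G.neighborSet v)] (hdeg : H.degree v = G.degree v) (hadj : G.Adj v w) :
    H.Adj v w := by
  have hnbr : H.neighborSet v = G.neighborSet v :=
    Set.eq_of_subset_of_card_le (H.neighborSet_subset v) (by
      rw [card_neighborSet_eq_degree]; exact hdeg.ge)
  exact (hnbr ▸ hadj : w ∈ H.neighborSet v)

theorem sum_degrees_eq_two_mul_card_edgeSet [Fintype V] (H : G.Subgraph)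
    [DecidablePred (· ∈ H.verts)] [DecidableRel H.Adj] :
    ∑ v ∈ H.verts.toFinset, H.degree v = 2 * Nat.card H.edgeSet := by
  classical
  have hzero : ∀ v ∈ univ, v ∉ H.verts.toFinset → H.degree v = 0 := fun v _ hv =>
    degree_of_notMem_verts (by simpa using hv)
  rw [sum_subset (subset_univ _) hzero, ← edgeSet_spanningCoe,
    Nat.card_eq_card_toFinset, ← edgeFinset, ← H.spanningCoe.sum_degrees_eq_twice_card_edges]
  simp

theorem mem_verts_of_connected_deleteVerts {H : G.Subgraph} {u s w : V}
    (hconn : ((⊤ : G.Subgraph).deleteVerts {u}).coe.Connected)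
    (hclosed : ∀ v ∈ H.verts, v ≠ u → ∀ x, G.Adj v x → H.Adj v x)
    (hs : s ∈ H.verts) (hsu : s ≠ u) (hwu : w ≠ u) : w ∈ H.verts := by
  let K := ((⊤ : G.Subgraph).deleteVerts {u}).coe
  have hreach : K.Reachable ⟨s, by simp [hsu]⟩ ⟨w, by simp [hwu]⟩ := hconn.preconnected _ _
  refine hreach.mem_subgraphVerts (H := H.comap (Subgraph.hom _)) (fun v hv x hvx => ?_) hs
  exact ⟨hvx, hclosed v hv (by simpa using v.2) x (Subgraph.coe_adj_sub _ _ _ hvx)⟩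

end SimpleGraph.Subgraph

namespace FairlyCubic

variable {V : Type*} [Fintype V] {G : SimpleGraph V} [DecidableRel G.Adj]

theorem degree_le_three (hf : FairlyCubic G) (v : V) : G.degree v ≤ 3 := by
  rcases hf.2 v with h | h <;> omega

theorem exists_degree_eq_two_ne (hf : FairlyCubic G) (u : V) : ∃ w, G.degree w = 2 ∧ w ≠ u := by
  obtain ⟨⟨x, hx⟩, ⟨y, hy⟩, hxy, -⟩ := Nat.card_eq_two_iff.1 hf.1
  by_cases hxu : x = u
  · exact ⟨y, hy, fun hyu => hxy (Subtype.ext (hxu.trans hyu.symm))⟩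
  · exact ⟨x, hx, hxu⟩

end FairlyCubic

theorem stmt4 {V : Type*} [Fintype V] (G : SimpleGraph V) [DecidableRel G.Adj]
    (h2 : TwoConnected G) (hf : FairlyCubic G) : Sparse G := by
  classical
  intro H hne
  suffices 2 * Nat.card H.edgeSet + 2 ≤ 3 * Nat.card H.verts by omega
  by_contra! hdense
  have hcard : #H.verts.toFinset = Nat.card H.verts := by
    rw [Set.toFinset_card, Nat.card_eq_fintype_card]
  obtain ⟨u, -, hu2, hfull⟩ := exists_forall_ne_eq_of_mul_card_le_sum_add_one
    (S := H.verts.toFinset) (f := fun v => H.degree v) (b := 3) (by simpa using hne)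
    (fun v _ => (H.degree_le v).trans (hf.degree_le_three v))
    (by rw [H.sum_degrees_eq_two_mul_card_edgeSet, hcard]; omega)
  have hsat : ∀ v ∈ H.verts, v ≠ u → H.degree v = 3 ∧ G.degree v = 3 := fun v hv hvu => by
    have := hfull v (by simpa using hv) hvu
    have := H.degree_le v
    have := hf.degree_le_three v
    omega
  obtain ⟨s, hus⟩ : ∃ s, H.Adj u s := H.degree_pos_iff_exists_adj.1 (by omega)
  have hspan : ∀ w, w ≠ u → w ∈ H.verts := fun w hwu =>
    H.mem_verts_of_connected_deleteVerts (h2.2.2 u)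
      (fun v hv hvu _ => H.adj_of_degree_eq (by rw [(hsat v hv hvu).1, (hsat v hv hvu).2]))
      hus.snd_mem hus.ne.symm hwu
  obtain ⟨w, hw2, hwu⟩ := hf.exists_degree_eq_two_ne u
  have := (hsat w (hspan w hwu) hwu).2
  omega
end

section
/- The complete bipartite graph K_{2,4} is not matching-decyclable. -/
open SimpleGraph

namespace SimpleGraph

variable {V : Type*} {G : SimpleGraph V}

theorem IsAcyclic.eq_of_adj_of_adj (hG : G.IsAcyclic) {u v c d : V} (huv : u ≠ v)
    (huc : G.Adj u c) (hvc : G.Adj v c) (hud : G.Adj u d) (hvd : G.Adj v d) : c = d := by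
  have hpath : ∀ {w} (huw : G.Adj u w) (hvw : G.Adj v w),
      (Walk.cons huw (Walk.cons hvw.symm Walk.nil)).IsPath := fun huw hvw => by
    simp [Walk.isPath_def, huv, huw.ne, hvw.ne.symm]
  have hsupp := congrArg (fun p : G.Path u v => p.1.support)
    ((hG.subsingleton_path u v).elim ⟨_, hpath huc hvc⟩ ⟨_, hpath hud hvd⟩)
  simpa using hsupp

end SimpleGraph

theorem IsMatchingIn.eq_of_mem_of_mem {V : Type*} {G : SimpleGraph V} {M : Set (Sym2 V)}
    (hM : IsMatchingIn G M) {v a b : V} (ha : s(v, a) ∈ M) (hb : s(v, b) ∈ M) : a = b := by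
  by_contra hab
  exact hM.2 _ ha _ hb (mt Sym2.congr_right.1 hab) v (by simp) (by simp)

theorem IsMatchingIn.card_filter_mem_le_one {V : Type*} {G : SimpleGraph V}
    {M : Set (Sym2 V)} (hM : IsMatchingIn G M) (v : V) (S : Finset V)
    [DecidablePred (s(v, ·) ∈ M)] :
    (S.filter (s(v, ·) ∈ M)).card ≤ 1 :=
  Finset.card_le_one.2 fun _ ha _ hb =>
    hM.eq_of_mem_of_mem (Finset.mem_filter.1 ha).2 (Finset.mem_filter.1 hb).2

open Classical in
theorem not_mDecyclable_of_four_le_card_common_neighbors {V : Type*} {G : SimpleGraph V}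
    {u v : V} (huv : u ≠ v) (S : Finset V) (hS : 4 ≤ S.card)
    (hadj : ∀ w ∈ S, G.Adj u w ∧ G.Adj v w) : ¬ MDecyclable G := by
  rintro ⟨M, hM, hacyc⟩
  -- `M` has at most one edge at `u` and one at `v`, so two vertices of `S` keep both edges.
  set T := S.filter fun w => s(u, w) ∉ M ∧ s(v, w) ∉ M
  have hT : 1 < T.card := by
    have hcover : S ⊆ T ∪ (S.filter (s(u, ·) ∈ M) ∪ S.filter (s(v, ·) ∈ M)) := by
      intro w hw
      by_cases hu : s(u, w) ∈ M <;> by_cases hv : s(v, w) ∈ M <;> simp [T, hw, hu, hv]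
    have := Finset.card_le_card hcover
    have := Finset.card_union_le T (S.filter (s(u, ·) ∈ M) ∪ S.filter (s(v, ·) ∈ M))
    have := Finset.card_union_le (S.filter (s(u, ·) ∈ M)) (S.filter (s(v, ·) ∈ M))
    have := hM.card_filter_mem_le_one u S
    have := hM.card_filter_mem_le_one v S
    omega
  obtain ⟨c, hc, d, hd, hcd⟩ := Finset.one_lt_card.1 hT
  simp only [T, Finset.mem_filter] at hc hd
  have hkept : ∀ {x w}, G.Adj x w → s(x, w) ∉ M → (G.deleteEdges M).Adj x w :=
    fun h hM => (deleteEdges_adj ..).2 ⟨h, hM⟩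
  exact hcd <| hacyc.eq_of_adj_of_adj huv (hkept (hadj c hc.1).1 hc.2.1)
    (hkept (hadj c hc.1).2 hc.2.2) (hkept (hadj d hd.1).1 hd.2.1) (hkept (hadj d hd.1).2 hd.2.2)

theorem stmt6 : ¬ MDecyclable (completeBipartiteGraph (Fin 2) (Fin 4)) :=
  not_mDecyclable_of_four_le_card_common_neighbors (u := Sum.inl 0) (v := Sum.inl 1) (by simp)
    (Finset.univ.map Function.Embedding.inr) (by simp) (by simp)
end

section
/- If G is a connected matching-decyclable graph, then G has a matching M such that G − M is a tree (i.e., acyclic and connected, spanning all vertices of G). -/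
/-!
Extend the forest `G - M` to a spanning tree `T` of `G`. Every edge of `G` outside `T` lies in
`M`, so the edges deleted to obtain `T` form a sub-matching of `M`.
-/

open SimpleGraph

lemma IsMatchingIn.mono {V : Type*} {G : SimpleGraph V} {M N : Set (Sym2 V)}
    (hM : IsMatchingIn G M) (hNM : N ⊆ M) : IsMatchingIn G N :=
  ⟨hNM.trans hM.1, fun e he f hf => hM.2 e (hNM he) f (hNM hf)⟩

lemma SimpleGraph.edgeSet_sdiff_subset_of_deleteEdges_le {V : Type*} {G H : SimpleGraph V}
    {s : Set (Sym2 V)} (h : G.deleteEdges s ≤ H) : G.edgeSet \ H.edgeSet ⊆ s := by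
  rintro e ⟨heG, heH⟩
  by_contra hes
  exact heH (edgeSet_mono h ((edgeSet_deleteEdges s).symm ▸ ⟨heG, hes⟩))

theorem stmt7 {V : Type*} (G : SimpleGraph V) (hc : G.Connected)
    (h : MDecyclable G) :
    ∃ M : Set (Sym2 V), IsMatchingIn G M ∧ (G.deleteEdges M).IsTree := by
  obtain ⟨M, hM, hacyclic⟩ := h
  obtain ⟨T, hMT, hTG, hT⟩ :=
    hc.exists_isTree_le_of_le_of_isAcyclic (G.deleteEdges_le M) hacyclic
  refine ⟨G.edgeSet \ T.edgeSet, hM.mono (edgeSet_sdiff_subset_of_deleteEdges_le hMT), ?_⟩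
  rwa [deleteEdges_sdiff_eq_of_le hTG]
end

section
/- A connected subcubic graph G is matching-decyclable if and only if G has a spanning tree T such that every leaf of T has degree at most 2 in G. -/
open SimpleGraph

/-!
Deleting a matching `M` from `G` leaves a forest, which extends to a spanning tree `T` of `G`;
every vertex loses at most one edge to `M`, so a leaf of `T` has `G`-degree at most `2`.
Conversely, the edges outside a spanning tree `T` form a matching: a vertex on two of them has
`T`-degree at most `1` because `G` is subcubic, hence is a leaf of `T`, yet has `G`-degree `3`.
-/

section

variable {V : Type*} {G H : SimpleGraph V} {M : Set (Sym2 V)}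

lemma isMatchingIn_iff_forall_subsingleton :
    IsMatchingIn G M ↔ M ⊆ G.edgeSet ∧ ∀ v, {w | s(v, w) ∈ M}.Subsingleton := by
  refine and_congr_right fun _ => ⟨fun hM v a ha b hb => ?_, fun hM e he f hf hef v hve hvf => ?_⟩
  · by_contra hab
    exact hM _ ha _ hb (fun h => hab (Sym2.congr_right.mp h)) v
      (Sym2.mem_mk_left v a) (Sym2.mem_mk_left v b)
  · obtain ⟨a, rfl⟩ := Sym2.mem_iff_exists.mp hve
    obtain ⟨b, rfl⟩ := Sym2.mem_iff_exists.mp hvf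
    exact hef (congrArg _ (hM v he hf))

lemma ncard_neighborSet_le_add_one [Finite V] (hM : ∀ v, {w | s(v, w) ∈ M}.Subsingleton)
    (hH : G.deleteEdges M ≤ H) (v : V) :
    (G.neighborSet v).ncard ≤ (H.neighborSet v).ncard + 1 := by
  have hcover : G.neighborSet v ⊆ H.neighborSet v ∪ {w | s(v, w) ∈ M} := fun w hw => by
    by_cases hm : s(v, w) ∈ M
    · exact Or.inr hm
    · exact Or.inl (hH (deleteEdges_adj.mpr ⟨hw, hm⟩))
  calc (G.neighborSet v).ncard
      _ ≤ (H.neighborSet v ∪ {w | s(v, w) ∈ M}).ncard := Set.ncard_le_ncard hcover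
      _ ≤ (H.neighborSet v).ncard + {w | s(v, w) ∈ M}.ncard := Set.ncard_union_le _ _
      _ ≤ (H.neighborSet v).ncard + 1 := by grw [Set.ncard_le_one_iff_subsingleton.mpr (hM v)]

lemma subsingleton_neighborSet_sdiff [Finite V] (hHG : H ≤ G) (hH : H.Connected)
    (hG : ∀ v, (G.neighborSet v).ncard ≤ 3)
    (hleaf : ∀ v, (H.neighborSet v).ncard = 1 → (G.neighborSet v).ncard ≤ 2) (v : V) :
    (G.neighborSet v \ H.neighborSet v).Subsingleton := by
  intro a ha b hb
  by_contra hab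
  have hpos : 0 < (H.neighborSet v).ncard :=
    (Set.ncard_pos).mpr ((hH.preconnected v a).nonempty_neighborSet_left (G.ne_of_adj ha.1))
  have hsub : insert a (insert b (H.neighborSet v)) ⊆ G.neighborSet v := by
    rintro w (rfl | rfl | hw)
    exacts [ha.1, hb.1, hHG hw]
  have hcard := Set.ncard_le_ncard hsub
  rw [Set.ncard_insert_of_notMem (by rintro (rfl | h); exacts [hab rfl, ha.2 h]),
    Set.ncard_insert_of_notMem hb.2] at hcard
  have := hleaf v (by linarith [hG v])
  omega

lemma mDecyclable_iff_exists_isTree_le [Finite V] (hc : G.Connected)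
    (hG : ∀ v, (G.neighborSet v).ncard ≤ 3) :
    MDecyclable G ↔
      ∃ F ≤ G, F.IsTree ∧ ∀ v, (F.neighborSet v).ncard = 1 → (G.neighborSet v).ncard ≤ 2 := by
  constructor
  · rintro ⟨M, hM, hM_acyclic⟩
    obtain ⟨F, hMF, hFG, hF⟩ :=
      hc.exists_isTree_le_of_le_of_isAcyclic (G.deleteEdges_le M) hM_acyclic
    have hdeg := ncard_neighborSet_le_add_one (isMatchingIn_iff_forall_subsingleton.mp hM).2 hMF
    exact ⟨F, hFG, hF, fun v hv => by linarith [hdeg v]⟩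
  · rintro ⟨F, hFG, hF, hleaf⟩
    refine ⟨G.edgeSet \ F.edgeSet, isMatchingIn_iff_forall_subsingleton.mpr
      ⟨Set.sdiff_subset, fun v => ?_⟩, by rw [deleteEdges_sdiff_eq_of_le hFG]; exact hF.isAcyclic⟩
    convert subsingleton_neighborSet_sdiff hFG hF.connected hG hleaf v using 1
    ext w
    simp

lemma exists_isSpanning_isTree_iff (p : V → Prop) :
    (∃ T : G.Subgraph, T.IsSpanning ∧ T.coe.IsTree ∧ ∀ v, Nat.card (T.neighborSet v) = 1 → p v) ↔
      ∃ F ≤ G, F.IsTree ∧ ∀ v, (F.neighborSet v).ncard = 1 → p v := by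
  constructor
  · rintro ⟨T, hT, hTree, hleaf⟩
    exact ⟨T.spanningCoe, T.spanningCoe_le,
      (T.spanningCoeEquivCoeOfSpanning hT).isTree_iff.mpr hTree, hleaf⟩
  · rintro ⟨F, hFG, hF, hleaf⟩
    have hT := toSubgraph.isSpanning F hFG
    exact ⟨toSubgraph F hFG, hT, (Subgraph.spanningCoeEquivCoeOfSpanning _ hT).isTree_iff.mp hF,
      hleaf⟩

end

theorem stmt8 {V : Type*} [Fintype V] (G : SimpleGraph V) [DecidableRel G.Adj]
    (hc : G.Connected) (hsub : ∀ v : V, G.degree v ≤ 3) :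
    MDecyclable G ↔
      ∃ T : G.Subgraph, T.IsSpanning ∧ T.coe.IsTree ∧
        ∀ v : V, Nat.card (T.neighborSet v) = 1 → G.degree v ≤ 2 := by
  have hdeg (v : V) : G.degree v = (G.neighborSet v).ncard := by
    rw [← card_neighborSet_eq_degree, ← Nat.card_coe_set_eq, Nat.card_eq_fintype_card]
  simp only [hdeg] at hsub ⊢
  rw [mDecyclable_iff_exists_isTree_le hc hsub, exists_isSpanning_isTree_iff]
end

section
/- Let G be a connected fairly cubic graph. Then G is matching-decyclable if and only if G has a Hamiltonian path whose two endpoints are exactly the two vertices of degree 2 in G. -/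
open SimpleGraph

/-! Deleting a matching `M` lowers every degree by at most one. A fairly cubic graph on `n`
vertices has degree sum `3n - 2`, so the forest `G - M` has degree sum at least `2n - 2`: it is a
spanning tree, and then every degree drops by exactly one. The tree thus has degree `1` at the two
vertices of degree `2` and degree `2` elsewhere, so the tree path between them is Hamiltonian.
Conversely, the edges off a Hamiltonian path between the two degree-`2` vertices meet each vertex
at most once, and deleting them leaves the path, which is acyclic. -/

namespace SimpleGraph

variable {V : Type*} {G H : SimpleGraph V}

lemma degree_eq_ncard_neighborSet [Fintype V] [DecidableRel G.Adj] (v : V) :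
    G.degree v = (G.neighborSet v).ncard := by
  rw [Set.ncard_eq_toFinset_card', ← G.card_neighborSet_eq_degree, Set.toFinset_card]

lemma subsingleton_neighborSet_diff_iff [Finite V] (hHG : H ≤ G) (v : V) :
    (G.neighborSet v \ H.neighborSet v).Subsingleton ↔
      (G.neighborSet v).ncard ≤ (H.neighborSet v).ncard + 1 := by
  have hsub : H.neighborSet v ⊆ G.neighborSet v := fun _ hw => hHG hw
  rw [← Set.ncard_le_one_iff_subsingleton, Set.ncard_sdiff hsub]
  have := Set.ncard_le_ncard hsub
  omega

lemma IsAcyclic.isTree_of_card_le [Finite V] [Nonempty V] (hH : H.IsAcyclic)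
    (hcard : Nat.card V ≤ Nat.card H.edgeSet + 1) : H.IsTree := by
  obtain ⟨F, hHF, -, hF⟩ := connected_top.exists_isTree_le_of_le_of_isAcyclic le_top hH
  have hF_card := (isTree_iff_connected_and_card.mp hF).2
  rw [Nat.card_coe_set_eq] at hcard hF_card
  have : H.edgeSet = F.edgeSet := Set.eq_of_subset_of_ncard_le (edgeSet_mono hHF) (by omega)
  rwa [edgeSet_inj.mp this]

namespace Walk

lemma IsPath.ncard_neighborSet_toSubgraph_of_ne {s t v : V} {p : G.Walk s t}
    (hp : p.IsPath) (hv : v ∈ p.support) (hvs : v ≠ s) (hvt : v ≠ t) :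
    (p.toSubgraph.neighborSet v).ncard = 2 := by
  obtain ⟨i, rfl, hi⟩ := p.mem_support_iff_exists_getVert.mp hv
  refine hp.ncard_neighborSet_toSubgraph_internal_eq_two ?_ ?_
  · rintro rfl
    exact hvs p.getVert_zero
  · refine lt_of_le_of_ne hi ?_
    rintro rfl
    exact hvt p.getVert_length

lemma IsPath.isAcyclic_spanningCoe_toSubgraph {s t : V} {p : G.Walk s t} (hp : p.IsPath) :
    p.toSubgraph.spanningCoe.IsAcyclic := by
  induction p with
  | nil =>
    refine IsAcyclic.anti (fun a b hab => ?_) isAcyclic_bot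
    simp at hab
  | cons h q ih =>
    rw [cons_isPath_iff] at hp
    rw [Walk.toSubgraph, Subgraph.sup_spanningCoe, Subgraph.spanningCoe_subgraphOfAdj, sup_comm]
    refine (ih hp.1).sup_edge_of_not_reachable fun ⟨w⟩ => hp.2 ?_
    exact mem_support_of_adj_toSubgraph (w.adj_snd (not_nil_of_ne h.ne))

lemma IsPath.isHamiltonian_of_ncard_neighborSet_le [Finite V] [DecidableEq V] {s t : V}
    {p : G.Walk s t} (hG : G.Preconnected) (hp : p.IsPath)
    (hdeg : ∀ v ∈ p.support, (G.neighborSet v).ncard ≤ (p.toSubgraph.neighborSet v).ncard) :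
    p.IsHamiltonian := by
  refine hp.isHamiltonian_of_mem fun w => by_contra fun hw => ?_
  obtain ⟨d, -, hd, hd'⟩ :=
    (hG s w).some.exists_boundary_dart {v | v ∈ p.support} p.start_mem_support hw
  have hnbr : p.toSubgraph.neighborSet d.fst = G.neighborSet d.fst :=
    Set.eq_of_subset_of_ncard_le (p.toSubgraph.neighborSet_subset _) (hdeg _ hd)
  have hadj : p.toSubgraph.Adj d.fst d.snd := by
    rw [← Subgraph.mem_neighborSet, hnbr]
    exact d.adj
  exact hd' (mem_support_of_adj_toSubgraph hadj.symm)

end Walk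

end SimpleGraph

section

variable {V : Type*} {G H : SimpleGraph V}

lemma IsMatchingIn.subsingleton_neighborSet_diff {M : Set (Sym2 V)} (hM : IsMatchingIn G M)
    (v : V) : (G.neighborSet v \ (G.deleteEdges M).neighborSet v).Subsingleton := by
  rintro a ⟨ha, ha'⟩ b ⟨hb, hb'⟩
  have haM : s(v, a) ∈ M := not_not.mp fun h => ha' ((deleteEdges_adj ..).mpr ⟨ha, h⟩)
  have hbM : s(v, b) ∈ M := not_not.mp fun h => hb' ((deleteEdges_adj ..).mpr ⟨hb, h⟩)
  by_contra hab
  exact hM.2 _ haM _ hbM (mt Sym2.congr_right.mp hab) v (Sym2.mem_mk_left _ _)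
    (Sym2.mem_mk_left _ _)

lemma isMatchingIn_edgeSet_diff (h : ∀ v, (G.neighborSet v \ H.neighborSet v).Subsingleton) :
    IsMatchingIn G (G.edgeSet \ H.edgeSet) := by
  refine ⟨Set.sdiff_subset, fun e he f hf hef v hve hvf => hef ?_⟩
  obtain ⟨a, rfl⟩ := Sym2.mem_iff_exists.mp hve
  obtain ⟨b, rfl⟩ := Sym2.mem_iff_exists.mp hvf
  rw [h v (show a ∈ G.neighborSet v \ H.neighborSet v from he)
    (show b ∈ G.neighborSet v \ H.neighborSet v from hf)]

namespace FairlyCubic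

variable [Fintype V] [DecidableRel G.Adj]

lemma exists_degree_eq_two (hf : FairlyCubic G) :
    ∃ s t : V, s ≠ t ∧ G.degree s = 2 ∧ G.degree t = 2 := by
  obtain ⟨⟨s, hs⟩, ⟨t, ht⟩, hst, -⟩ := Nat.card_eq_two_iff.mp hf.1
  exact ⟨s, t, fun h => hst (Subtype.ext h), hs, ht⟩

lemma degree_eq_three (hf : FairlyCubic G) {s t v : V} (hst : s ≠ t) (hs : G.degree s = 2)
    (ht : G.degree t = 2) (hvs : v ≠ s) (hvt : v ≠ t) : G.degree v = 3 := by
  refine (hf.2 v).resolve_left fun hv => ?_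
  have hsub : ({v, s, t} : Set V) ⊆ {w | G.degree w = 2} := by
    rintro w (rfl | rfl | rfl) <;> assumption
  have hcard := Set.ncard_le_ncard hsub
  rw [Set.ncard_insert_of_notMem (by simp [hvs, hvt]), Set.ncard_pair hst,
    ← Nat.card_coe_set_eq] at hcard
  have htwo := hf.1
  simp only [Set.coe_ofPred] at hcard
  omega

lemma sum_degrees_add_two (hf : FairlyCubic G) : ∑ v, G.degree v + 2 = 3 * Fintype.card V := by
  classical
  have htwo : (Finset.univ.filter fun v => G.degree v = 2).card = 2 := by
    rw [← Fintype.card_subtype, ← Nat.card_eq_fintype_card]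
    exact hf.1
  calc ∑ v, G.degree v + 2
      = ∑ v, (G.degree v + if G.degree v = 2 then 1 else 0) := by
        rw [Finset.sum_add_distrib, Finset.sum_boole, Nat.cast_id, htwo]
    _ = ∑ _v : V, 3 := Finset.sum_congr rfl fun v _ => by rcases hf.2 v with h | h <;> simp [h]
    _ = 3 * Fintype.card V := by simp [mul_comm]

lemma ncard_neighborSet_eq_toSubgraph_add_one (hf : FairlyCubic G) {s t v : V} (hst : s ≠ t)
    (hs : G.degree s = 2) (ht : G.degree t = 2) {p : H.Walk s t} (hp : p.IsPath)
    (hv : v ∈ p.support) :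
    (G.neighborSet v).ncard = (p.toSubgraph.neighborSet v).ncard + 1 := by
  have hnil : ¬ p.Nil := Walk.not_nil_of_ne hst
  rw [← degree_eq_ncard_neighborSet]
  by_cases hvs : v = s
  · subst hvs
    rw [hp.neighborSet_toSubgraph_startpoint hnil, Set.ncard_singleton, hs]
  by_cases hvt : v = t
  · subst hvt
    rw [hp.neighborSet_toSubgraph_endpoint hnil, Set.ncard_singleton, ht]
  rw [hf.degree_eq_three hst hs ht hvs hvt, hp.ncard_neighborSet_toSubgraph_of_ne hv hvs hvt]

lemma isTree_and_degree_eq_of_degree_le (hf : FairlyCubic G) {T : SimpleGraph V}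
    [DecidableRel T.Adj] (hT : T.IsAcyclic) (hle : ∀ v, G.degree v ≤ T.degree v + 1) :
    T.IsTree ∧ ∀ v, G.degree v = T.degree v + 1 := by
  have hsumG := hf.sum_degrees_add_two
  have hsumT : ∑ v, (T.degree v + 1) = 2 * T.edgeFinset.card + Fintype.card V := by
    simp [Finset.sum_add_distrib, T.sum_degrees_eq_twice_card_edges]
  have hsum_le : ∑ v, G.degree v ≤ ∑ v, (T.degree v + 1) := Finset.sum_le_sum fun v _ => hle v
  obtain ⟨s, -⟩ := hf.exists_degree_eq_two
  have : Nonempty V := ⟨s⟩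
  have hTree : T.IsTree := hT.isTree_of_card_le <| by
    rw [Nat.card_eq_fintype_card, Nat.card_eq_fintype_card, ← edgeFinset_card]
    omega
  have hTcard := hTree.card_edgeFinset
  exact ⟨hTree, fun v => (Finset.sum_eq_sum_iff_of_le fun v _ => hle v).mp (by omega) v
    (Finset.mem_univ v)⟩

theorem exists_isHamiltonian_of_mDecyclable [DecidableEq V] (hf : FairlyCubic G)
    (hG : MDecyclable G) :
    ∃ s t : V, s ≠ t ∧ G.degree s = 2 ∧ G.degree t = 2 ∧
      ∃ p : G.Walk s t, p.IsPath ∧ p.IsHamiltonian := by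
  classical
  obtain ⟨M, hM, hacyc⟩ := hG
  obtain ⟨hT, hdeg⟩ := hf.isTree_and_degree_eq_of_degree_le hacyc fun v => by
    rw [degree_eq_ncard_neighborSet, degree_eq_ncard_neighborSet,
      ← subsingleton_neighborSet_diff_iff (G.deleteEdges_le M)]
    exact hM.subsingleton_neighborSet_diff v
  obtain ⟨s, t, hst, hs, ht⟩ := hf.exists_degree_eq_two
  obtain ⟨p, hp⟩ := hT.connected.exists_isPath s t
  have hham : p.IsHamiltonian := by
    refine hp.isHamiltonian_of_ncard_neighborSet_le hT.connected.preconnected fun v hv => ?_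
    have hGv := hf.ncard_neighborSet_eq_toSubgraph_add_one hst hs ht hp hv
    have hTv := hdeg v
    rw [degree_eq_ncard_neighborSet, degree_eq_ncard_neighborSet] at hTv
    omega
  have hham' : (p.mapLe (G.deleteEdges_le M)).IsHamiltonian :=
    hham.map (Hom.ofLE _) Function.bijective_id
  exact ⟨s, t, hst, hs, ht, _, hham'.isPath, hham'⟩

theorem mDecyclable_of_isHamiltonian [DecidableEq V] (hf : FairlyCubic G) {s t : V}
    (hst : s ≠ t) (hs : G.degree s = 2) (ht : G.degree t = 2) {p : G.Walk s t}
    (hp : p.IsHamiltonian) : MDecyclable G := by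
  refine ⟨G.edgeSet \ p.toSubgraph.spanningCoe.edgeSet, isMatchingIn_edgeSet_diff fun v => ?_,
    hp.isPath.isAcyclic_spanningCoe_toSubgraph.anti fun a b hab => ?_⟩
  · rw [subsingleton_neighborSet_diff_iff (Subgraph.spanningCoe_le _)]
    exact (hf.ncard_neighborSet_eq_toSubgraph_add_one hst hs ht hp.isPath (hp.mem_support v)).le
  · rw [deleteEdges_adj] at hab
    by_contra h
    exact hab.2 ⟨hab.1, h⟩

end FairlyCubic

end

theorem stmt9_general {V : Type*} [Fintype V] [DecidableEq V] (G : SimpleGraph V)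
    [DecidableRel G.Adj] (hf : FairlyCubic G) :
    MDecyclable G ↔
      ∃ s t : V, s ≠ t ∧ G.degree s = 2 ∧ G.degree t = 2 ∧
        ∃ p : G.Walk s t, p.IsPath ∧ p.IsHamiltonian := by
  refine ⟨hf.exists_isHamiltonian_of_mDecyclable, ?_⟩
  rintro ⟨s, t, hst, hs, ht, p, -, hp⟩
  exact hf.mDecyclable_of_isHamiltonian hst hs ht hp

theorem stmt9 {V : Type*} [Fintype V] [DecidableEq V] (G : SimpleGraph V)
    [DecidableRel G.Adj] (hc : G.Connected) (hf : FairlyCubic G) :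
    MDecyclable G ↔
      ∃ s t : V, s ≠ t ∧ G.degree s = 2 ∧ G.degree t = 2 ∧
        ∃ p : G.Walk s t, p.IsPath ∧ p.IsHamiltonian :=
  stmt9_general G hf
end

section
/- In a gem-free chordal graph that is sparse, every cycle has length 3 or 4; equivalently, a sparse chordal graph contains no k-cycle for any k ≥ 5. -/
open SimpleGraph

/-!
By chordality every cycle of length `k ≥ 4` has a chord, which splits it into two shorter
cycles whose vertex sets meet only in the ends of the chord, so the two spanned edge sets share
only the chord. Induction on `k` then shows that the vertex set of a `k`-cycle in a chordal graph
spans at least `2k - 3` edges (the cycle itself and `k - 3` chords). A sparse graph has at most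
`⌊3k/2⌋ - 1` edges on `k` vertices, and `2k - 3 ≤ ⌊3k/2⌋ - 1` forces `k ≤ 4`.
-/

open Finset

namespace SimpleGraph

variable {V : Type*} {G : SimpleGraph V}

open scoped Classical in
noncomputable def spannedEdges (G : SimpleGraph V) (s : Finset V) : Finset (Sym2 V) :=
  {e ∈ s.sym2 | e ∈ G.edgeSet}

theorem mem_spannedEdges {s : Finset V} {e : Sym2 V} :
    e ∈ G.spannedEdges s ↔ (∀ v ∈ e, v ∈ s) ∧ e ∈ G.edgeSet := by
  simp only [spannedEdges, mem_filter, mem_sym2_iff]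

theorem mk_mem_spannedEdges {s : Finset V} {u v : V} (hu : u ∈ s) (hv : v ∈ s)
    (hadj : G.Adj u v) : s(u, v) ∈ G.spannedEdges s :=
  mem_spannedEdges.2 ⟨fun w hw => by rcases Sym2.mem_iff.1 hw with rfl | rfl <;> assumption, hadj⟩

theorem spannedEdges_mono {s t : Finset V} (h : s ⊆ t) :
    G.spannedEdges s ⊆ G.spannedEdges t := fun e he => by
  rw [mem_spannedEdges] at he ⊢
  exact ⟨fun v hv => h (he.1 v hv), he.2⟩

theorem spannedEdges_inter [DecidableEq V] (s t : Finset V) :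
    G.spannedEdges (s ∩ t) = G.spannedEdges s ∩ G.spannedEdges t := by
  ext e
  simp only [mem_inter, mem_spannedEdges]
  grind

theorem spannedEdges_pair_subset [DecidableEq V] (x y : V) :
    G.spannedEdges {x, y} ⊆ {s(x, y)} := by
  intro e he
  induction e using Sym2.ind with
  | h u v =>
    obtain ⟨hmem, hadj⟩ := mem_spannedEdges.1 he
    have hu := hmem u (Sym2.mem_mk_left u v)
    have hv := hmem v (Sym2.mem_mk_right u v)
    rw [mem_edgeSet] at hadj
    simp only [mem_insert, mem_singleton] at hu hv ⊢
    rcases hu with rfl | rfl <;> rcases hv with rfl | rfl <;> simp_all [Sym2.eq_swap]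

theorem card_spannedEdges_add_card_spannedEdges_le [DecidableEq V] {s t : Finset V} {x y : V}
    (h : s ∩ t ⊆ {x, y}) :
    #(G.spannedEdges s) + #(G.spannedEdges t) ≤ #(G.spannedEdges (s ∪ t)) + 1 := by
  rw [← card_union_add_card_inter, ← spannedEdges_inter]
  refine Nat.add_le_add (card_le_card ?_) ?_
  · exact union_subset (spannedEdges_mono subset_union_left)
      (spannedEdges_mono subset_union_right)
  · exact (card_le_card ((spannedEdges_mono h).trans (spannedEdges_pair_subset x y))).trans
      (card_singleton _).le

theorem Sparse.card_spannedEdges_le (hs : Sparse G) {s : Finset V} (hne : s.Nonempty) :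
    #(G.spannedEdges s) ≤ 3 * #s / 2 - 1 := by
  have hE : ((⊤ : G.Subgraph).induce s).edgeSet = G.spannedEdges s := by
    ext e
    induction e using Sym2.ind
    simp [mem_spannedEdges, and_assoc]
  have h := hs ((⊤ : G.Subgraph).induce s) hne
  rwa [hE, Subgraph.induce_verts, Nat.card_coe_set_eq, Nat.card_coe_set_eq,
    Set.ncard_coe_finset, Set.ncard_coe_finset] at h

/-- `f 0, …, f (k - 1)` are the successive vertices of a `k`-cycle of `G`; the values of `f`
from `k` on play no role. -/
def IsCycleSeq (G : SimpleGraph V) (k : ℕ) (f : ℕ → V) : Prop :=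
  Set.InjOn f (Set.Iio k) ∧ ∀ i < k, G.Adj (f i) (f ((i + 1) % k))

theorem image_range_mod_subset [DecidableEq V] {k : ℕ} {f : ℕ → V} (hk : 0 < k) (t n : ℕ) :
    (range n).image (fun m => f ((t + m) % k)) ⊆ (range k).image f :=
  image_subset_iff.2 fun _ _ => mem_image_of_mem f (mem_range.2 (Nat.mod_lt _ hk))

theorem image_take_inter_image_rotate_subset [DecidableEq V] {k d : ℕ} {f : ℕ → V}
    (hf : Set.InjOn f (Set.Iio k)) (hd : d < k) :
    (range (d + 1)).image f ∩ (range (k - d + 1)).image (fun m => f ((d + m) % k)) ⊆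
      {f 0, f d} := by
  intro x hx
  simp only [mem_inter, mem_image, mem_range] at hx
  obtain ⟨⟨a, ha, rfl⟩, ⟨m, hm, hfm⟩⟩ := hx
  have hmod := hf (Set.mem_Iio.2 (Nat.mod_lt _ (by omega))) (Set.mem_Iio.2 (by omega)) hfm
  have : a = 0 ∨ a = d := by
    rcases lt_or_ge (d + m) k with h | h
    · rw [Nat.mod_eq_of_lt h] at hmod; omega
    · rw [Nat.mod_eq_sub_mod h, Nat.mod_eq_of_lt (by omega)] at hmod; omega
  rcases this with rfl | rfl <;> simp

namespace IsCycleSeq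

variable {k : ℕ} {f : ℕ → V}

theorem rotate (hf : IsCycleSeq G k f) (t : ℕ) :
    IsCycleSeq G k (fun m => f ((t + m) % k)) := by
  obtain ⟨hinj, hadj⟩ := hf
  refine ⟨fun a ha b hb h => ?_, fun i hi => ?_⟩
  · have hk : 0 < k := Nat.zero_lt_of_lt ha
    have hab : a ≡ b [MOD k] :=
      Nat.ModEq.add_left_cancel' t (hinj (Nat.mod_lt _ hk) (Nat.mod_lt _ hk) h)
    rwa [Nat.ModEq, Nat.mod_eq_of_lt ha, Nat.mod_eq_of_lt hb] at hab
  · have h := hadj ((t + i) % k) (Nat.mod_lt _ (by omega))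
    rwa [Nat.mod_add_mod, add_assoc, ← Nat.add_mod_mod t (i + 1)] at h

theorem take (hf : IsCycleSeq G k f) {j : ℕ} (hj : j < k) (hadj : G.Adj (f j) (f 0)) :
    IsCycleSeq G (j + 1) f := by
  refine ⟨hf.1.mono fun i hi => by simp at hi ⊢; omega, fun i hi => ?_⟩
  rcases Nat.lt_succ_iff_lt_or_eq.1 hi with hi | rfl
  · have h := hf.2 i (by omega)
    rwa [Nat.mod_eq_of_lt (by omega)] at h ⊢
  · rwa [Nat.mod_self]

theorem adj_iff_of_chordless (hf : IsCycleSeq G k f)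
    (hno : ∀ i j, i + 2 ≤ j → j < k → j + 2 ≤ i + k → ¬ G.Adj (f i) (f j))
    {i j : ℕ} (hi : i < k) (hj : j < k) :
    G.Adj (f i) (f j) ↔ i = (j + 1) % k ∨ j = (i + 1) % k := by
  have hsucc : ∀ i < k, (i + 1) % k = if i + 1 = k then 0 else i + 1 := fun i hi => by
    split_ifs with h
    · rw [h, Nat.mod_self]
    · exact Nat.mod_eq_of_lt (by omega)
  have hlt : ∀ i j, i < j → j < k → G.Adj (f i) (f j) → i = (j + 1) % k ∨ j = (i + 1) % k := by
    intro i j hij hj hadj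
    have : j = i + 1 ∨ (i = 0 ∧ j + 1 = k) := by
      by_contra h
      exact hno i j (by omega) hj (by omega) hadj
    rw [hsucc i (by omega), hsucc j hj]
    split_ifs <;> omega
  constructor
  · intro hadj
    rcases lt_trichotomy i j with h | rfl | h
    · exact hlt i j h hj hadj
    · exact absurd hadj (G.irrefl)
    · exact (hlt j i h hi hadj.symm).symm
  · rintro (rfl | rfl)
    · exact (hf.2 j hj).symm
    · exact hf.2 i hi

theorem exists_chord (hch : Chordal G) (hk : 4 ≤ k) (hf : IsCycleSeq G k f) :
    ∃ i j, i + 2 ≤ j ∧ j < k ∧ j + 2 ≤ i + k ∧ G.Adj (f i) (f j) := by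
  by_contra! hno
  obtain ⟨n, rfl⟩ : ∃ n, k = n + 2 := ⟨k - 2, by omega⟩
  have hsub : ∀ a b : Fin (n + 2), a - b = 1 ↔ a.val = (b.val + 1) % (n + 2) := fun a b => by
    rw [sub_eq_iff_eq_add, Fin.ext_iff, Fin.val_add, Fin.val_one, add_comm 1]
  refine (hch (n + 2) hk).false ⟨⟨fun a => f a, fun a b h => Fin.ext (hf.1 a.isLt b.isLt h)⟩, ?_⟩
  intro a b
  simp only [cycleGraph_adj, hsub]
  exact hf.adj_iff_of_chordless hno a.isLt b.isLt

theorem card_image_range [DecidableEq V] (hf : IsCycleSeq G k f) : #((range k).image f) = k :=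
  (card_image_of_injOn (by rw [coe_range]; exact hf.1)).trans (card_range k)

theorem exists_split_of_adj [DecidableEq V] (hf : IsCycleSeq G k f) {i j : ℕ} (hij : i < j)
    (hjk : j < k) (hadj : G.Adj (f i) (f j)) :
    ∃ g h : ℕ → V, IsCycleSeq G (j - i + 1) g ∧ IsCycleSeq G (k - (j - i) + 1) h ∧
      (range (j - i + 1)).image g ∩ (range (k - (j - i) + 1)).image h ⊆ {f i, f j} ∧
      (range (j - i + 1)).image g ∪ (range (k - (j - i) + 1)).image h ⊆ (range k).image f := by
  have hk : 0 < k := by omega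
  have hg := hf.rotate i
  have hh := hg.rotate (j - i)
  have hg0 : f ((i + 0) % k) = f i := by rw [add_zero, Nat.mod_eq_of_lt (by omega)]
  have hgd : f ((i + (j - i)) % k) = f j := by rw [Nat.add_sub_cancel' hij.le, Nat.mod_eq_of_lt hjk]
  refine ⟨_, _, hg.take (j := j - i) (by omega) ?_, hh.take (j := k - (j - i)) (by omega) ?_,
    ?_, union_subset (image_range_mod_subset hk i _)
      ((image_range_mod_subset hk _ _).trans (image_range_mod_subset hk i k))⟩
  · rw [hg0, hgd]
    exact hadj.symm
  · rw [Nat.add_sub_cancel' (by omega : j - i ≤ k), Nat.mod_self, add_zero, add_zero,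
      Nat.mod_eq_of_lt (by omega : j - i < k), Nat.mod_eq_of_lt (by omega : i < k), hgd]
    exact hadj
  · rw [← hg0, ← hgd]
    exact image_take_inter_image_rotate_subset hg.1 (by omega)

theorem three_le_card_spannedEdges [DecidableEq V] (hf : IsCycleSeq G 3 f) :
    3 ≤ #(G.spannedEdges ((range 3).image f)) := by
  have hne : ∀ i < 3, ∀ j < 3, i ≠ j → f i ≠ f j := fun i hi j hj hij h =>
    hij (hf.1 (Set.mem_Iio.2 hi) (Set.mem_Iio.2 hj) h)
  have h01 := hne 0 (by norm_num) 1 (by norm_num) (by norm_num)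
  have h02 := hne 0 (by norm_num) 2 (by norm_num) (by norm_num)
  have h12 := hne 1 (by norm_num) 2 (by norm_num) (by norm_num)
  have hmem : ∀ i < 3, f i ∈ (range 3).image f := fun i hi => mem_image_of_mem f (mem_range.2 hi)
  have hsub : {s(f 0, f 1), s(f 1, f 2), s(f 2, f 0)} ⊆ G.spannedEdges ((range 3).image f) := by
    simp only [insert_subset_iff, singleton_subset_iff]
    refine ⟨mk_mem_spannedEdges (hmem 0 (by norm_num)) (hmem 1 (by norm_num)) ?_,
      mk_mem_spannedEdges (hmem 1 (by norm_num)) (hmem 2 (by norm_num)) ?_,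
      mk_mem_spannedEdges (hmem 2 (by norm_num)) (hmem 0 (by norm_num)) ?_⟩ <;>
    simpa using hf.2 _ (by norm_num : _ < 3)
  have hcard : #{s(f 0, f 1), s(f 1, f 2), s(f 2, f 0)} = 3 :=
    card_eq_three.2 ⟨_, _, _, by simp [*], by simp [*, Ne.symm], by simp [*, Ne.symm], rfl⟩
  exact hcard.symm.le.trans (card_le_card hsub)

theorem two_mul_sub_three_le_card_spannedEdges [DecidableEq V] (hch : Chordal G) (hk : 3 ≤ k)
    (hf : IsCycleSeq G k f) : 2 * k - 3 ≤ #(G.spannedEdges ((range k).image f)) := by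
  induction k using Nat.strong_induction_on generalizing f with
  | _ k ih =>
  rcases hk.eq_or_lt with rfl | hk
  · exact hf.three_le_card_spannedEdges
  obtain ⟨i, j, hij, hjk, hji, hadj⟩ := hf.exists_chord hch hk
  obtain ⟨g, h, hg, hh, hinter, hunion⟩ := hf.exists_split_of_adj (by omega) hjk hadj
  have h₁ := ih _ (by omega) (by omega) hg
  have h₂ := ih _ (by omega) (by omega) hh
  have hsplit := card_spannedEdges_add_card_spannedEdges_le (G := G) hinter
  have hmono := card_le_card (spannedEdges_mono (G := G) hunion)
  omega

end IsCycleSeq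

theorem Walk.IsCycle.isCycleSeq_getVert {v : V} {c : G.Walk v v} (hc : c.IsCycle) :
    IsCycleSeq G c.length c.getVert := by
  refine ⟨fun a ha b hb h => hc.getVert_injOn' (by simp at ha ⊢; omega)
    (by simp at hb ⊢; omega) h, fun i hi => ?_⟩
  have h := c.adj_getVert_succ hi
  rcases Nat.lt_or_ge (i + 1) c.length with hi' | hi'
  · rwa [Nat.mod_eq_of_lt hi']
  · rw [show i + 1 = c.length by omega, c.getVert_length] at h
    rwa [show i + 1 = c.length by omega, Nat.mod_self, c.getVert_zero]

end SimpleGraph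

theorem stmt15 {V : Type*} (G : SimpleGraph V) (hch : Chordal G)
    (hs : Sparse G) :
    ∀ (v : V) (c : G.Walk v v), c.IsCycle → c.length = 3 ∨ c.length = 4 := by
  classical
  intro v c hc
  have h3 := hc.three_le_length
  have hf := hc.isCycleSeq_getVert
  have hcard := hf.card_image_range
  have hlower := hf.two_mul_sub_three_le_card_spannedEdges hch h3
  have hupper := hs.card_spannedEdges_le (s := (range c.length).image c.getVert)
    ⟨c.getVert 0, mem_image_of_mem _ (mem_range.2 (by omega))⟩
  omega
end
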